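/- arXiv:2012.06073 — 4 statements merged into one kernel-verified Lean document; each statement's English description precedes it below -/
import Mathlib

section
/- Local bound between two space–time trajectories (Theorem 4.2): retaining the window-residual setup, for all w, v ∈ V and all w₀, v₀ ∈ E, ‖w - v‖ ≤ (1 / c₁) * ‖R w w₀ - R v v₀‖ + (c₂ / c₁) * ‖w₀ - v₀‖. -/
/-- Local bound between two space–time trajectories (Theorem 4.2). -/
theorem local_bound_between_two_trajectories
    (M N : ℕ)
    (A B : EuclideanSpace ℝ (Fin M) →L[ℝ] EuclideanSpace ℝ (Fin M))
    (Aic Bic : EuclideanSpace ℝ (Fin N) →L[ℝ] EuclideanSpace ℝ (Fin M))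
    (Δt : ℝ) (hΔt : 0 < Δt)
    (F : EuclideanSpace ℝ (Fin M) → EuclideanSpace ℝ (Fin M))
    (f₀ : EuclideanSpace ℝ (Fin N) → EuclideanSpace ℝ (Fin N))
    (κ : ℝ) (hκ : 0 ≤ κ)
    (hF : ∀ x y, ‖F x - F y‖ ≤ κ * ‖x - y‖)
    (hf₀ : ∀ x y, ‖f₀ x - f₀ y‖ ≤ κ * ‖x - y‖)
    (σA σB σAic σBic : ℝ)
    (hσA : 0 < σA) (hA : ∀ x, σA * ‖x‖ ≤ ‖A x‖)
    (hσB : 0 ≤ σB) (hB : ∀ x, ‖B x‖ ≤ σB * ‖x‖)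
    (hσAic : 0 ≤ σAic) (hAic : ∀ x, ‖Aic x‖ ≤ σAic * ‖x‖)
    (hσBic : 0 ≤ σBic) (hBic : ∀ x, ‖Bic x‖ ≤ σBic * ‖x‖)
    (R : EuclideanSpace ℝ (Fin M) → EuclideanSpace ℝ (Fin N) → EuclideanSpace ℝ (Fin M))
    (hR : ∀ w w₀, R w w₀ = A w - Δt • B (F w) + Aic w₀ - Δt • Bic (f₀ w₀))
    (c₁ c₂ : ℝ)
    (hc₁ : c₁ = σA - σB * Δt * κ) (hc₂ : c₂ = σAic + Δt * κ * σBic)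
    (hc₁pos : 0 < c₁)
    (w v : EuclideanSpace ℝ (Fin M)) (w₀ v₀ : EuclideanSpace ℝ (Fin N)) :
    ‖w - v‖ ≤ (1 / c₁) * ‖R w w₀ - R v v₀‖ + (c₂ / c₁) * ‖w₀ - v₀‖ := by
  have hdiff : A (w - v) = (R w w₀ - R v v₀) + Δt • B (F w - F v)
      - Aic (w₀ - v₀) + Δt • Bic (f₀ w₀ - f₀ v₀) := by
    rw [hR, hR]
    simp only [map_sub, smul_sub]
    abel
  have key : σA * ‖w - v‖ ≤ ‖R w w₀ - R v v₀‖ + Δt * (σB * (κ * ‖w - v‖))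
      + σAic * ‖w₀ - v₀‖ + Δt * (σBic * (κ * ‖w₀ - v₀‖)) := by
    calc σA * ‖w - v‖ ≤ ‖A (w - v)‖ := hA _
      _ ≤ ‖R w w₀ - R v v₀‖ + ‖Δt • B (F w - F v)‖ + ‖Aic (w₀ - v₀)‖
          + ‖Δt • Bic (f₀ w₀ - f₀ v₀)‖ := by
        rw [hdiff]
        calc ‖_ + _ - _ + _‖ ≤ ‖(R w w₀ - R v v₀) + Δt • B (F w - F v)
              - Aic (w₀ - v₀)‖ + ‖Δt • Bic (f₀ w₀ - f₀ v₀)‖ := norm_add_le _ _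
          _ ≤ (‖(R w w₀ - R v v₀) + Δt • B (F w - F v)‖ + ‖Aic (w₀ - v₀)‖)
              + ‖Δt • Bic (f₀ w₀ - f₀ v₀)‖ := by
            gcongr; exact norm_sub_le _ _
          _ ≤ _ := by
            gcongr
            exact norm_add_le _ _
      _ ≤ _ := by
        rw [norm_smul, norm_smul, Real.norm_eq_abs, abs_of_pos hΔt]
        gcongr
        · calc ‖B (F w - F v)‖ ≤ σB * ‖F w - F v‖ := hB _
            _ ≤ σB * (κ * ‖w - v‖) := by gcongr; exact hF _ _
        · exact hAic _
        · calc ‖Bic (f₀ w₀ - f₀ v₀)‖ ≤ σBic * ‖f₀ w₀ - f₀ v₀‖ := hBic _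
            _ ≤ σBic * (κ * ‖w₀ - v₀‖) := by gcongr; exact hf₀ _ _
  have key2 : c₁ * ‖w - v‖ ≤ ‖R w w₀ - R v v₀‖ + c₂ * ‖w₀ - v₀‖ := by
    rw [hc₁, hc₂]; nlinarith [key]
  have h3 : ‖w - v‖ ≤ (‖R w w₀ - R v v₀‖ + c₂ * ‖w₀ - v₀‖) / c₁ := by
    rw [le_div_iff₀ hc₁pos, mul_comm]; exact key2
  calc ‖w - v‖ ≤ (‖R w w₀ - R v v₀‖ + c₂ * ‖w₀ - v₀‖) / c₁ := h3
    _ = (1 / c₁) * ‖R w w₀ - R v v₀‖ + (c₂ / c₁) * ‖w₀ - v₀‖ := by ring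
end

section
/- Local a posteriori error bound for WST-LSPG (Corollary 4.3): retaining the window-residual setup, suppose u ∈ V and u₀ ∈ E satisfy R u u₀ = 0 (the full-order-model trajectory over the window). Then for every approximate trajectory ũ ∈ V with approximate window initial condition ũ₀ ∈ E, ‖ũ - u‖ ≤ (1 / c₁) * ‖R ũ ũ₀‖ + (c₂ / c₁) * ‖ũ₀ - u₀‖. -/
/-!
Subtracting the two residuals isolates `A (ũ - u)` as the residual difference plus the
velocity and initial-condition perturbations. Bounding `A` from below by `σA`, the other operators
from above and the velocities by their Lipschitz constant gives
`c₁ ‖ũ - u‖ ≤ ‖R ũ ũ₀ - R u u₀‖ + c₂ ‖ũ₀ - u₀‖`; with `R u u₀ = 0` and `c₁ > 0` this is the bound.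
-/

theorem norm_smul_comp_sub_le {V X W : Type*} [SeminormedAddCommGroup V]
    [SeminormedAddCommGroup X] [SeminormedAddCommGroup W] [NormedSpace ℝ W]
    {B : X → W} {F : V → X} {Δt σB κ : ℝ} (hΔt : 0 ≤ Δt) (hσB : 0 ≤ σB)
    (hB : ∀ x, ‖B x‖ ≤ σB * ‖x‖) (hF : ∀ x y, ‖F x - F y‖ ≤ κ * ‖x - y‖) (x y : V) : ‖Δt • B (F x - F y)‖ ≤ Δt * σB * κ * ‖x - y‖ := by
  rw [norm_smul, Real.norm_of_nonneg hΔt, mul_assoc Δt, mul_assoc Δt, mul_assoc σB]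
  gcongr
  exact (hB _).trans (mul_le_mul_of_nonneg_left (hF x y) hσB)

section WindowResidual

variable {V E W X Y : Type*}
  [SeminormedAddCommGroup V] [NormedSpace ℝ V] [SeminormedAddCommGroup E] [NormedSpace ℝ E]
  [SeminormedAddCommGroup W] [NormedSpace ℝ W] [SeminormedAddCommGroup X] [NormedSpace ℝ X]
  [SeminormedAddCommGroup Y] [NormedSpace ℝ Y]

def windowResidual (A : V →L[ℝ] W) (B : X →L[ℝ] W) (Aic : E →L[ℝ] W) (Bic : Y →L[ℝ] W)
    (Δt : ℝ) (F : V → X) (f₀ : E → Y) (w : V) (w₀ : E) : W :=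
  A w - Δt • B (F w) + Aic w₀ - Δt • Bic (f₀ w₀)

theorem map_sub_eq_windowResidual_sub (A : V →L[ℝ] W) (B : X →L[ℝ] W) (Aic : E →L[ℝ] W)
    (Bic : Y →L[ℝ] W) (Δt : ℝ) (F : V → X) (f₀ : E → Y) (w v : V) (w₀ v₀ : E) :
    A (w - v) = (windowResidual A B Aic Bic Δt F f₀ w w₀ - windowResidual A B Aic Bic Δt F f₀ v v₀)
      + Δt • B (F w - F v) + Aic (v₀ - w₀) + Δt • Bic (f₀ w₀ - f₀ v₀) := by
  simp only [windowResidual, map_sub, smul_sub]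
  abel

theorem mul_norm_sub_le_norm_windowResidual_sub {A : V →L[ℝ] W} {B : X →L[ℝ] W}
    {Aic : E →L[ℝ] W} {Bic : Y →L[ℝ] W} {Δt κ σA σB σAic σBic : ℝ} {F : V → X} {f₀ : E → Y}
    (hΔt : 0 ≤ Δt) (hF : ∀ x y, ‖F x - F y‖ ≤ κ * ‖x - y‖)
    (hf₀ : ∀ x y, ‖f₀ x - f₀ y‖ ≤ κ * ‖x - y‖)
    (hA : ∀ x, σA * ‖x‖ ≤ ‖A x‖) (hσB : 0 ≤ σB) (hB : ∀ x, ‖B x‖ ≤ σB * ‖x‖)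
    (hAic : ∀ x, ‖Aic x‖ ≤ σAic * ‖x‖) (hσBic : 0 ≤ σBic) (hBic : ∀ x, ‖Bic x‖ ≤ σBic * ‖x‖)
    (w v : V) (w₀ v₀ : E) :
    (σA - σB * Δt * κ) * ‖w - v‖ ≤
      ‖windowResidual A B Aic Bic Δt F f₀ w w₀ - windowResidual A B Aic Bic Δt F f₀ v v₀‖
        + (σAic + Δt * κ * σBic) * ‖w₀ - v₀‖ := by
  have hAic' : ‖Aic (v₀ - w₀)‖ ≤ σAic * ‖w₀ - v₀‖ := norm_sub_rev v₀ w₀ ▸ hAic _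
  have hAerr := calc
    σA * ‖w - v‖ ≤ ‖A (w - v)‖ := hA _
    _ ≤ ‖windowResidual A B Aic Bic Δt F f₀ w w₀ - windowResidual A B Aic Bic Δt F f₀ v v₀‖
          + Δt * σB * κ * ‖w - v‖ + σAic * ‖w₀ - v₀‖ + Δt * σBic * κ * ‖w₀ - v₀‖ := by
      rw [map_sub_eq_windowResidual_sub A B Aic Bic Δt F f₀]
      refine norm_add₄_le.trans ?_
      gcongr
      exacts [norm_smul_comp_sub_le hΔt hσB hB hF w v,
        norm_smul_comp_sub_le hΔt hσBic hBic hf₀ w₀ v₀]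
  linarith

end WindowResidual

theorem local_a_posteriori_error_bound_general
    (M N : ℕ)
    (A B : EuclideanSpace ℝ (Fin M) →L[ℝ] EuclideanSpace ℝ (Fin M))
    (Aic Bic : EuclideanSpace ℝ (Fin N) →L[ℝ] EuclideanSpace ℝ (Fin M))
    (Δt : ℝ) (hΔt : 0 < Δt)
    (F : EuclideanSpace ℝ (Fin M) → EuclideanSpace ℝ (Fin M))
    (f₀ : EuclideanSpace ℝ (Fin N) → EuclideanSpace ℝ (Fin N))
    (κ : ℝ)
    (hF : ∀ x y, ‖F x - F y‖ ≤ κ * ‖x - y‖)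
    (hf₀ : ∀ x y, ‖f₀ x - f₀ y‖ ≤ κ * ‖x - y‖)
    (σA σB σAic σBic : ℝ)
    (hA : ∀ x, σA * ‖x‖ ≤ ‖A x‖)
    (hσB : 0 ≤ σB) (hB : ∀ x, ‖B x‖ ≤ σB * ‖x‖)
    (hAic : ∀ x, ‖Aic x‖ ≤ σAic * ‖x‖)
    (hσBic : 0 ≤ σBic) (hBic : ∀ x, ‖Bic x‖ ≤ σBic * ‖x‖)
    (R : EuclideanSpace ℝ (Fin M) → EuclideanSpace ℝ (Fin N) → EuclideanSpace ℝ (Fin M))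
    (hR : ∀ w w₀, R w w₀ = A w - Δt • B (F w) + Aic w₀ - Δt • Bic (f₀ w₀))
    (c₁ c₂ : ℝ)
    (hc₁ : c₁ = σA - σB * Δt * κ) (hc₂ : c₂ = σAic + Δt * κ * σBic)
    (hc₁pos : 0 < c₁)
    (u : EuclideanSpace ℝ (Fin M)) (u₀ : EuclideanSpace ℝ (Fin N))
    (hFOM : R u u₀ = 0)
    (uR : EuclideanSpace ℝ (Fin M)) (uR₀ : EuclideanSpace ℝ (Fin N)) :
    ‖uR - u‖ ≤ (1 / c₁) * ‖R uR uR₀‖ + (c₂ / c₁) * ‖uR₀ - u₀‖ := by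
  obtain rfl : R = windowResidual A B Aic Bic Δt F f₀ := funext₂ hR
  have hstab := mul_norm_sub_le_norm_windowResidual_sub hΔt.le hF hf₀ hA hσB hB hAic hσBic hBic
    uR u uR₀ u₀
  rw [hFOM, sub_zero, ← hc₁, ← hc₂] at hstab
  rw [one_div_mul_eq_div, div_mul_eq_mul_div, ← add_div, le_div_iff₀ hc₁pos, mul_comm]
  exact hstab

/-- Local a posteriori error bound for WST-LSPG (Corollary 4.3). -/
theorem local_a_posteriori_error_bound
    (M N : ℕ)
    (A B : EuclideanSpace ℝ (Fin M) →L[ℝ] EuclideanSpace ℝ (Fin M))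
    (Aic Bic : EuclideanSpace ℝ (Fin N) →L[ℝ] EuclideanSpace ℝ (Fin M))
    (Δt : ℝ) (hΔt : 0 < Δt)
    (F : EuclideanSpace ℝ (Fin M) → EuclideanSpace ℝ (Fin M))
    (f₀ : EuclideanSpace ℝ (Fin N) → EuclideanSpace ℝ (Fin N))
    (κ : ℝ) (hκ : 0 ≤ κ)
    (hF : ∀ x y, ‖F x - F y‖ ≤ κ * ‖x - y‖)
    (hf₀ : ∀ x y, ‖f₀ x - f₀ y‖ ≤ κ * ‖x - y‖)
    (σA σB σAic σBic : ℝ)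
    (hσA : 0 < σA) (hA : ∀ x, σA * ‖x‖ ≤ ‖A x‖)
    (hσB : 0 ≤ σB) (hB : ∀ x, ‖B x‖ ≤ σB * ‖x‖)
    (hσAic : 0 ≤ σAic) (hAic : ∀ x, ‖Aic x‖ ≤ σAic * ‖x‖)
    (hσBic : 0 ≤ σBic) (hBic : ∀ x, ‖Bic x‖ ≤ σBic * ‖x‖)
    (R : EuclideanSpace ℝ (Fin M) → EuclideanSpace ℝ (Fin N) → EuclideanSpace ℝ (Fin M))
    (hR : ∀ w w₀, R w w₀ = A w - Δt • B (F w) + Aic w₀ - Δt • Bic (f₀ w₀))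
    (c₁ c₂ : ℝ)
    (hc₁ : c₁ = σA - σB * Δt * κ) (hc₂ : c₂ = σAic + Δt * κ * σBic)
    (hc₁pos : 0 < c₁)
    (u : EuclideanSpace ℝ (Fin M)) (u₀ : EuclideanSpace ℝ (Fin N))
    (hFOM : R u u₀ = 0)
    (uR : EuclideanSpace ℝ (Fin M)) (uR₀ : EuclideanSpace ℝ (Fin N)) :
    ‖uR - u‖ ≤ (1 / c₁) * ‖R uR uR₀‖ + (c₂ / c₁) * ‖uR₀ - u₀‖ :=
  local_a_posteriori_error_bound_general M N A B Aic Bic Δt hΔt F f₀ κ hF hf₀ σA σB σAic σBic hA hσB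
    hB hAic hσBic hBic R hR c₁ c₂ hc₁ hc₂ hc₁pos u u₀ hFOM uR uR₀
end

section
/- Global a posteriori error bound for WST-LSPG (Corollary 4.4): retaining the indexed window-residual setup, for every window index k, ‖ũ k - u k‖ ≤ ∑_{i = 0}^{k} [ (∏_{j ∈ Finset.range (k - i)} c₂ (k - j)) / (∏_{j ∈ Finset.range (k - i + 1)} c₁ (k - j)) ] * ‖R i (ũ i) (ũ₀ i)‖; that is, the space–time error over window k is bounded by a sum of the residual norms of the approximate solutions over windows 0 through k, weighted by products of the constants c₂ and c₁ of the intervening windows. -/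
/-- Global a posteriori error bound for WST-LSPG (Corollary 4.4). -/
theorem global_a_posteriori_error_bound
    (N : ℕ) (M : ℕ → ℕ)
    (A B : ∀ k : ℕ, EuclideanSpace ℝ (Fin (M k)) →L[ℝ] EuclideanSpace ℝ (Fin (M k)))
    (Aic Bic : ∀ k : ℕ, EuclideanSpace ℝ (Fin N) →L[ℝ] EuclideanSpace ℝ (Fin (M k)))
    (Δt : ℝ) (hΔt : 0 < Δt)
    (F : ∀ k : ℕ, EuclideanSpace ℝ (Fin (M k)) → EuclideanSpace ℝ (Fin (M k)))
    (f₀ : ℕ → EuclideanSpace ℝ (Fin N) → EuclideanSpace ℝ (Fin N))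
    (κ : ℝ) (hκ : 0 ≤ κ)
    (hF : ∀ k x y, ‖F k x - F k y‖ ≤ κ * ‖x - y‖)
    (hf₀ : ∀ k x y, ‖f₀ k x - f₀ k y‖ ≤ κ * ‖x - y‖)
    (σA σB σAic σBic : ℕ → ℝ)
    (hσA : ∀ k, 0 < σA k) (hA : ∀ k x, σA k * ‖x‖ ≤ ‖A k x‖)
    (hσB : ∀ k, 0 ≤ σB k) (hB : ∀ k x, ‖B k x‖ ≤ σB k * ‖x‖)
    (hσAic : ∀ k, 0 ≤ σAic k) (hAic : ∀ k x, ‖Aic k x‖ ≤ σAic k * ‖x‖)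
    (hσBic : ∀ k, 0 ≤ σBic k) (hBic : ∀ k x, ‖Bic k x‖ ≤ σBic k * ‖x‖)
    (R : ∀ k : ℕ, EuclideanSpace ℝ (Fin (M k)) → EuclideanSpace ℝ (Fin N) →
      EuclideanSpace ℝ (Fin (M k)))
    (hR : ∀ k w w₀, R k w w₀ =
      A k w - Δt • B k (F k w) + Aic k w₀ - Δt • Bic k (f₀ k w₀))
    (c₁ c₂ : ℕ → ℝ)
    (hc₁ : ∀ k, c₁ k = σA k - σB k * Δt * κ)
    (hc₂ : ∀ k, c₂ k = σAic k + Δt * κ * σBic k)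
    (hc₁pos : ∀ k, 0 < c₁ k)
    (u : ∀ k : ℕ, EuclideanSpace ℝ (Fin (M k))) (u₀ : ℕ → EuclideanSpace ℝ (Fin N))
    (hFOM : ∀ k, R k (u k) (u₀ k) = 0)
    (uR : ∀ k : ℕ, EuclideanSpace ℝ (Fin (M k))) (uR₀ : ℕ → EuclideanSpace ℝ (Fin N))
    (hIC0 : uR₀ 0 = u₀ 0)
    (hIC : ∀ k, 1 ≤ k → ‖uR₀ k - u₀ k‖ ≤ ‖uR (k - 1) - u (k - 1)‖)
    (k : ℕ) :
    ‖uR k - u k‖ ≤ ∑ i ∈ Finset.range (k + 1),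
      ((∏ j ∈ Finset.range (k - i), c₂ (k - j)) /
        (∏ j ∈ Finset.range (k - i + 1), c₁ (k - j))) * ‖R i (uR i) (uR₀ i)‖ := by
  have hc₂nn : ∀ n : ℕ, 0 ≤ c₂ n := fun n => by
    rw [hc₂ n]
    have := hσAic n; have := hσBic n
    positivity
  -- per-window key inequality
  have hkey : ∀ n : ℕ, c₁ n * ‖uR n - u n‖ ≤
      ‖R n (uR n) (uR₀ n)‖ + c₂ n * ‖uR₀ n - u₀ n‖ := by
    intro n
    have h1 := hR n (uR n) (uR₀ n)
    have h2 := hR n (u n) (u₀ n)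
    rw [hFOM n] at h2
    have h2' : A n (u n) - Δt • B n (F n (u n)) + Aic n (u₀ n)
        - Δt • Bic n (f₀ n (u₀ n)) = 0 := h2.symm
    have hdiff : A n (uR n - u n) =
        R n (uR n) (uR₀ n) + (Δt • B n (F n (uR n)) - Δt • B n (F n (u n)))
          - Aic n (uR₀ n - u₀ n)
          + (Δt • Bic n (f₀ n (uR₀ n)) - Δt • Bic n (f₀ n (u₀ n))) := by
      have h2'' : -((A n) (u n) - Δt • (B n) (F n (u n)) + (Aic n) (u₀ n)
          - Δt • (Bic n) (f₀ n (u₀ n))) = 0 := neg_eq_zero.mpr h2'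
      rw [h1, map_sub, map_sub, ← sub_eq_zero, ← h2'']
      abel
    have hX : ‖Δt • B n (F n (uR n)) - Δt • B n (F n (u n))‖ ≤
        Δt * (σB n * (κ * ‖uR n - u n‖)) := by
      rw [← smul_sub, norm_smul, Real.norm_eq_abs, abs_of_pos hΔt, ← map_sub]
      have hb := hB n (F n (uR n) - F n (u n))
      have hf := hF n (uR n) (u n)
      have h3 : σB n * ‖F n (uR n) - F n (u n)‖ ≤ σB n * (κ * ‖uR n - u n‖) :=
        mul_le_mul_of_nonneg_left hf (hσB n)
      exact mul_le_mul_of_nonneg_left (hb.trans h3) hΔt.le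
    have hZ : ‖Δt • Bic n (f₀ n (uR₀ n)) - Δt • Bic n (f₀ n (u₀ n))‖ ≤
        Δt * (σBic n * (κ * ‖uR₀ n - u₀ n‖)) := by
      rw [← smul_sub, norm_smul, Real.norm_eq_abs, abs_of_pos hΔt, ← map_sub]
      have hb := hBic n (f₀ n (uR₀ n) - f₀ n (u₀ n))
      have hf := hf₀ n (uR₀ n) (u₀ n)
      have h3 : σBic n * ‖f₀ n (uR₀ n) - f₀ n (u₀ n)‖ ≤
          σBic n * (κ * ‖uR₀ n - u₀ n‖) :=
        mul_le_mul_of_nonneg_left hf (hσBic n)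
      exact mul_le_mul_of_nonneg_left (hb.trans h3) hΔt.le
    have hY := hAic n (uR₀ n - u₀ n)
    have htri : ‖A n (uR n - u n)‖ ≤
        ‖R n (uR n) (uR₀ n)‖ + Δt * (σB n * (κ * ‖uR n - u n‖))
          + σAic n * ‖uR₀ n - u₀ n‖ + Δt * (σBic n * (κ * ‖uR₀ n - u₀ n‖)) := by
      rw [hdiff]
      have t1 := norm_add_le
        (R n (uR n) (uR₀ n) + (Δt • B n (F n (uR n)) - Δt • B n (F n (u n)))
          - Aic n (uR₀ n - u₀ n))
        (Δt • Bic n (f₀ n (uR₀ n)) - Δt • Bic n (f₀ n (u₀ n)))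
      have t2 := norm_sub_le
        (R n (uR n) (uR₀ n) + (Δt • B n (F n (uR n)) - Δt • B n (F n (u n))))
        (Aic n (uR₀ n - u₀ n))
      have t3 := norm_add_le (R n (uR n) (uR₀ n))
        (Δt • B n (F n (uR n)) - Δt • B n (F n (u n)))
      linarith
    have hAx := hA n (uR n - u n)
    rw [hc₁ n, hc₂ n]
    nlinarith [htri, hAx]
  -- induction for the global bound
  induction k with
  | zero =>
    have h0 := hkey 0
    have hz : ‖uR₀ 0 - u₀ 0‖ = 0 := by rw [hIC0, sub_self, norm_zero]
    rw [hz, mul_zero, add_zero] at h0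
    simp only [Finset.sum_range_one, Nat.sub_zero, Nat.sub_self, Nat.zero_sub,
      zero_add, Finset.prod_range_one, Finset.prod_range_zero]
    rw [div_mul_eq_mul_div, one_mul, le_div_iff₀ (hc₁pos 0)]
    linarith [mul_comm (c₁ 0) ‖uR 0 - u 0‖]
  | succ k ih =>
    have hk := hkey (k + 1)
    have hic : ‖uR₀ (k + 1) - u₀ (k + 1)‖ ≤ ‖uR k - u k‖ := by
      simpa using hIC (k + 1) (Nat.le_add_left 1 k)
    set Sk := ∑ i ∈ Finset.range (k + 1),
      ((∏ j ∈ Finset.range (k - i), c₂ (k - j)) /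
        (∏ j ∈ Finset.range (k - i + 1), c₁ (k - j))) * ‖R i (uR i) (uR₀ i)‖ with hSk
    have hbound : c₁ (k + 1) * ‖uR (k + 1) - u (k + 1)‖ ≤
        ‖R (k + 1) (uR (k + 1)) (uR₀ (k + 1))‖ + c₂ (k + 1) * Sk := by
      have h3 : c₂ (k + 1) * ‖uR₀ (k + 1) - u₀ (k + 1)‖ ≤ c₂ (k + 1) * Sk :=
        mul_le_mul_of_nonneg_left (hic.trans ih) (hc₂nn (k + 1))
      linarith [hk]
    have hsum : (∑ i ∈ Finset.range (k + 1 + 1),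
        ((∏ j ∈ Finset.range (k + 1 - i), c₂ (k + 1 - j)) /
          (∏ j ∈ Finset.range (k + 1 - i + 1), c₁ (k + 1 - j))) * ‖R i (uR i) (uR₀ i)‖)
        = c₂ (k + 1) / c₁ (k + 1) * Sk
          + 1 / c₁ (k + 1) * ‖R (k + 1) (uR (k + 1)) (uR₀ (k + 1))‖ := by
      rw [Finset.sum_range_succ]
      congr 1
      · rw [hSk, Finset.mul_sum]
        apply Finset.sum_congr rfl
        intro i hi
        have hik : i ≤ k := Nat.lt_succ_iff.mp (Finset.mem_range.mp hi)
        have h1 : k + 1 - i = (k - i) + 1 := by omega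
        rw [h1, Finset.prod_range_succ', Finset.prod_range_succ']
        simp only [Nat.succ_sub_succ_eq_sub, Nat.sub_zero, Nat.add_sub_cancel]
        rw [← div_mul_div_comm]
        ring
      · simp
    rw [hsum]
    have hcp := hc₁pos (k + 1)
    calc ‖uR (k + 1) - u (k + 1)‖
        ≤ (‖R (k + 1) (uR (k + 1)) (uR₀ (k + 1))‖ + c₂ (k + 1) * Sk) / c₁ (k + 1) := by
          rw [le_div_iff₀ hcp]
          linarith [mul_comm (c₁ (k + 1)) ‖uR (k + 1) - u (k + 1)‖]
      _ = c₂ (k + 1) / c₁ (k + 1) * Sk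
          + 1 / c₁ (k + 1) * ‖R (k + 1) (uR (k + 1)) (uR₀ (k + 1))‖ := by
          field_simp
          ring
end

section
/- Global a priori error bound for WST-LSPG (Corollary 4.6): retaining the indexed window-residual setup with trial subspaces and the WST-LSPG optimality property, for every window index k, ‖ũ k - u k‖ ≤ ∑_{i = 0}^{k} [ (∏_{j ∈ Finset.range (k - i)} 2 * c₂ (k - j)) / (∏_{j ∈ Finset.range (k - i + 1)} c₁ (k - j)) ] * ‖R i (û i) (û₀ i)‖; that is, the space–time error over window k is bounded, a priori, by a weighted sum of the residual norms of the projected full-order-model solutions over windows 0 through k. -/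
/-!
Subtracting the full-order equation `R (u, u₀) = 0` splits a window residual into a space–time
part `A w - Δt B F(w)`, which is bounded below by `c₁ ‖w - u‖` because `A` dominates the Lipschitz
perturbation `Δt B F`, and an initial-condition part, which moves by at most `c₂ ‖w₀ - u₀‖`.
LSPG optimality against the projected solution `û`, together with `‖ũ₀ - û₀‖ ≤ ‖ũ₀ - u₀‖`
(projection onto `W ∋ ũ₀` is nonexpansive), gives the one-window estimate
`c₁ ‖ũ - u‖ ≤ ‖R (û, û₀)‖ + 2 c₂ ‖ũ₀ - u₀‖`. The initial-condition error of window `k + 1`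
is dominated by the error of window `k`, and unrolling this linear recursion (a discrete Grönwall
argument) produces the weighted sum.
-/

open Finset

section Residual

variable {X Y Z : Type*} [SeminormedAddCommGroup X] [SeminormedAddCommGroup Y] [NormedSpace ℝ Y]
  [SeminormedAddCommGroup Z] [NormedSpace ℝ Z]

theorem norm_smul_apply_sub_smul_apply_le {Δt σ κ : ℝ} (hΔt : 0 ≤ Δt) (hσ : 0 ≤ σ)
    {B : Y →L[ℝ] Z} (hB : ∀ y, ‖B y‖ ≤ σ * ‖y‖)
    {F : X → Y} (hF : ∀ x x', ‖F x - F x'‖ ≤ κ * ‖x - x'‖) (x x' : X) :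
    ‖Δt • B (F x) - Δt • B (F x')‖ ≤ Δt * σ * κ * ‖x - x'‖ := by
  rw [← smul_sub, ← map_sub, norm_smul, Real.norm_of_nonneg hΔt, mul_assoc, mul_assoc]
  exact mul_le_mul_of_nonneg_left ((hB _).trans (mul_le_mul_of_nonneg_left (hF x x') hσ)) hΔt

variable [NormedSpace ℝ X]

theorem sub_mul_norm_sub_le_norm_sub_sub {σ τ : ℝ} {L : X →L[ℝ] Y} (hL : ∀ x, σ * ‖x‖ ≤ ‖L x‖)
    {P : X → Y} (hP : ∀ x x', ‖P x - P x'‖ ≤ τ * ‖x - x'‖) (x x' : X) :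
    (σ - τ) * ‖x - x'‖ ≤ ‖(L x - P x) - (L x' - P x')‖ := by
  have hsplit : L (x - x') = ((L x - P x) - (L x' - P x')) + (P x - P x') := by
    rw [map_sub]; abel
  have hlower := hL (x - x')
  rw [hsplit] at hlower
  linarith [norm_add_le ((L x - P x) - (L x' - P x')) (P x - P x'), hP x x']

theorem norm_sub_sub_le_add_mul_norm_sub {σ τ : ℝ} {L : X →L[ℝ] Y} (hL : ∀ x, ‖L x‖ ≤ σ * ‖x‖)
    {P : X → Y} (hP : ∀ x x', ‖P x - P x'‖ ≤ τ * ‖x - x'‖) (x x' : X) :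
    ‖(L x - P x) - (L x' - P x')‖ ≤ (σ + τ) * ‖x - x'‖ := by
  have hsplit : (L x - P x) - (L x' - P x') = L (x - x') - (P x - P x') := by
    rw [map_sub]; abel
  rw [hsplit]
  linarith [norm_sub_le (L (x - x')) (P x - P x'), hL (x - x'), hP x x']

end Residual

section Stability

variable {X Y Z : Type*} [SeminormedAddCommGroup X] [SeminormedAddCommGroup Y]
  [SeminormedAddCommGroup Z] {G : X → Z} {H : Y → Z} {c₁ c₂ : ℝ}

theorem mul_norm_sub_le_of_add_eq_zero (hG : ∀ x x', c₁ * ‖x - x'‖ ≤ ‖G x - G x'‖)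
    (hH : ∀ y y', ‖H y - H y'‖ ≤ c₂ * ‖y - y'‖) {u : X} {u₀ : Y} (hu : G u + H u₀ = 0)
    (w : X) (w₀ : Y) : c₁ * ‖w - u‖ ≤ ‖G w + H w₀‖ + c₂ * ‖w₀ - u₀‖ := by
  have hsplit : G w - G u = (G w + H w₀) - (H w₀ - H u₀) := by
    rw [eq_neg_of_add_eq_zero_left hu]; abel
  calc c₁ * ‖w - u‖ ≤ ‖G w - G u‖ := hG w u
    _ ≤ ‖G w + H w₀‖ + ‖H w₀ - H u₀‖ := hsplit ▸ norm_sub_le _ _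
    _ ≤ ‖G w + H w₀‖ + c₂ * ‖w₀ - u₀‖ := by gcongr; exact hH w₀ u₀

theorem mul_norm_sub_le_of_norm_add_le (hG : ∀ x x', c₁ * ‖x - x'‖ ≤ ‖G x - G x'‖)
    (hH : ∀ y y', ‖H y - H y'‖ ≤ c₂ * ‖y - y'‖) (hc₂ : 0 ≤ c₂) {u ũ û : X} {u₀ ũ₀ û₀ : Y}
    (hu : G u + H u₀ = 0) (hopt : ‖G ũ + H ũ₀‖ ≤ ‖G û + H ũ₀‖)
    (hproj : ‖ũ₀ - û₀‖ ≤ ‖ũ₀ - u₀‖) :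
    c₁ * ‖ũ - u‖ ≤ ‖G û + H û₀‖ + 2 * c₂ * ‖ũ₀ - u₀‖ := by
  have hshift : ‖G û + H ũ₀‖ ≤ ‖G û + H û₀‖ + c₂ * ‖ũ₀ - û₀‖ := by
    have := norm_sub_norm_le (G û + H ũ₀) (G û + H û₀)
    rw [add_sub_add_left_eq_sub] at this
    linarith [hH ũ₀ û₀]
  linarith [mul_norm_sub_le_of_add_eq_zero hG hH hu ũ ũ₀, mul_le_mul_of_nonneg_left hproj hc₂]

end Stability

theorem Submodule.norm_sub_orthogonalProjectionOnto_le_of_mem {𝕜 E : Type*} [RCLike 𝕜]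
    [NormedAddCommGroup E] [InnerProductSpace 𝕜 E] (K : Submodule 𝕜 E)
    [K.HasOrthogonalProjection] {x : E} (hx : x ∈ K) (y : E) :
    ‖x - (K.orthogonalProjectionOnto y : E)‖ ≤ ‖x - y‖ := by
  have := K.lipschitzWith_starProjection.dist_le_mul x y
  rw [K.starProjection_eq_self_iff.mpr hx] at this
  rwa [dist_eq_norm, dist_eq_norm, NNReal.coe_one, one_mul, starProjection_apply] at this

section Gronwall

noncomputable def gronwallWeight (a b : ℕ → ℝ) (k i : ℕ) : ℝ :=
  (∏ j ∈ range (k - i), b (k - j)) / ∏ j ∈ range (k - i + 1), a (k - j)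

variable {a b : ℕ → ℝ}

theorem gronwallWeight_self (k : ℕ) : gronwallWeight a b k k = (a k)⁻¹ := by
  simp [gronwallWeight]

theorem gronwallWeight_succ {k i : ℕ} (hi : i ≤ k) :
    gronwallWeight a b (k + 1) i = b (k + 1) / a (k + 1) * gronwallWeight a b k i := by
  rw [gronwallWeight, gronwallWeight, show k + 1 - i = k - i + 1 by omega, prod_range_succ',
    prod_range_succ']
  simp only [Nat.add_sub_add_right, Nat.sub_zero]
  ring

theorem sum_gronwallWeight_succ_mul (r : ℕ → ℝ) (k : ℕ) :
    ∑ i ∈ range (k + 2), gronwallWeight a b (k + 1) i * r i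
      = b (k + 1) / a (k + 1) * ∑ i ∈ range (k + 1), gronwallWeight a b k i * r i
        + r (k + 1) / a (k + 1) := by
  rw [sum_range_succ, gronwallWeight_self, mul_sum, inv_mul_eq_div]
  congr 1
  refine sum_congr rfl fun i hi => ?_
  rw [gronwallWeight_succ (Nat.lt_succ_iff.mp (mem_range.mp hi)), mul_assoc]

theorem le_sum_gronwallWeight_mul {e r : ℕ → ℝ} (ha : ∀ k, 0 < a k) (hb : ∀ k, 0 ≤ b k)
    (h0 : a 0 * e 0 ≤ r 0) (hsucc : ∀ k, a (k + 1) * e (k + 1) ≤ r (k + 1) + b (k + 1) * e k)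
    (k : ℕ) : e k ≤ ∑ i ∈ range (k + 1), gronwallWeight a b k i * r i := by
  induction k with
  | zero =>
    rw [sum_range_one, gronwallWeight_self, inv_mul_eq_div, le_div_iff₀ (ha 0)]
    linarith
  | succ k ih =>
    rw [sum_gronwallWeight_succ_mul]
    calc e (k + 1)
        ≤ (r (k + 1) + b (k + 1) * ∑ i ∈ range (k + 1), gronwallWeight a b k i * r i)
          / a (k + 1) := by
          rw [le_div_iff₀ (ha _)]
          linarith [hsucc k, mul_le_mul_of_nonneg_left ih (hb (k + 1))]
      _ = _ := by ring

end Gronwall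

theorem global_a_priori_error_bound_general
    (N : ℕ) (M : ℕ → ℕ)
    (A B : ∀ k : ℕ, EuclideanSpace ℝ (Fin (M k)) →L[ℝ] EuclideanSpace ℝ (Fin (M k)))
    (Aic Bic : ∀ k : ℕ, EuclideanSpace ℝ (Fin N) →L[ℝ] EuclideanSpace ℝ (Fin (M k)))
    (Δt : ℝ) (hΔt : 0 < Δt)
    (F : ∀ k : ℕ, EuclideanSpace ℝ (Fin (M k)) → EuclideanSpace ℝ (Fin (M k)))
    (f₀ : ℕ → EuclideanSpace ℝ (Fin N) → EuclideanSpace ℝ (Fin N))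
    (κ : ℝ) (hκ : 0 ≤ κ)
    (hF : ∀ k x y, ‖F k x - F k y‖ ≤ κ * ‖x - y‖)
    (hf₀ : ∀ k x y, ‖f₀ k x - f₀ k y‖ ≤ κ * ‖x - y‖)
    (σA σB σAic σBic : ℕ → ℝ)
    (hA : ∀ k x, σA k * ‖x‖ ≤ ‖A k x‖)
    (hσB : ∀ k, 0 ≤ σB k) (hB : ∀ k x, ‖B k x‖ ≤ σB k * ‖x‖)
    (hσAic : ∀ k, 0 ≤ σAic k) (hAic : ∀ k x, ‖Aic k x‖ ≤ σAic k * ‖x‖)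
    (hσBic : ∀ k, 0 ≤ σBic k) (hBic : ∀ k x, ‖Bic k x‖ ≤ σBic k * ‖x‖)
    (R : ∀ k : ℕ, EuclideanSpace ℝ (Fin (M k)) → EuclideanSpace ℝ (Fin N) →
      EuclideanSpace ℝ (Fin (M k)))
    (hR : ∀ k w w₀, R k w w₀ =
      A k w - Δt • B k (F k w) + Aic k w₀ - Δt • Bic k (f₀ k w₀))
    (c₁ c₂ : ℕ → ℝ)
    (hc₁ : ∀ k, c₁ k = σA k - σB k * Δt * κ)
    (hc₂ : ∀ k, c₂ k = σAic k + Δt * κ * σBic k)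
    (hc₁pos : ∀ k, 0 < c₁ k)
    (u : ∀ k : ℕ, EuclideanSpace ℝ (Fin (M k))) (u₀ : ℕ → EuclideanSpace ℝ (Fin N))
    (hFOM : ∀ k, R k (u k) (u₀ k) = 0)
    (uR : ∀ k : ℕ, EuclideanSpace ℝ (Fin (M k))) (uR₀ : ℕ → EuclideanSpace ℝ (Fin N))
    (hIC0 : uR₀ 0 = u₀ 0)
    (hIC : ∀ k, 1 ≤ k → ‖uR₀ k - u₀ k‖ ≤ ‖uR (k - 1) - u (k - 1)‖)
    (S : ∀ k : ℕ, Set (EuclideanSpace ℝ (Fin (M k))))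
    (W : ℕ → Submodule ℝ (EuclideanSpace ℝ (Fin N)))
    (huR₀W : ∀ k, uR₀ k ∈ W k)
    (uP : ∀ k : ℕ, EuclideanSpace ℝ (Fin (M k)))
    (huPS : ∀ k, uP k ∈ S k)
    (uP₀ : ℕ → EuclideanSpace ℝ (Fin N))
    (huP₀ : ∀ k, uP₀ k = (Submodule.orthogonalProjectionOnto (W k) (u₀ k) : EuclideanSpace ℝ (Fin N)))
    (hopt : ∀ k, ∀ w ∈ S k, ‖R k (uR k) (uR₀ k)‖ ≤ ‖R k w (uR₀ k)‖)
    (k : ℕ) :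
    ‖uR k - u k‖ ≤ ∑ i ∈ Finset.range (k + 1),
      ((∏ j ∈ Finset.range (k - i), 2 * c₂ (k - j)) /
        (∏ j ∈ Finset.range (k - i + 1), c₁ (k - j))) * ‖R i (uP i) (uP₀ i)‖ := by
  have hc₂nonneg : ∀ k, 0 ≤ c₂ k := fun k => by
    rw [hc₂]
    exact add_nonneg (hσAic k) (mul_nonneg (mul_nonneg hΔt.le hκ) (hσBic k))
  set G := fun k (w : EuclideanSpace ℝ (Fin (M k))) => A k w - Δt • B k (F k w)
  set H := fun k (w₀ : EuclideanSpace ℝ (Fin N)) => Aic k w₀ - Δt • Bic k (f₀ k w₀)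
  have hRGH : ∀ k w w₀, R k w w₀ = G k w + H k w₀ := fun k w w₀ => by
    rw [hR, add_sub_assoc]
  have hG : ∀ k x x', c₁ k * ‖x - x'‖ ≤ ‖G k x - G k x'‖ := fun k x x' => by
    have := sub_mul_norm_sub_le_norm_sub_sub (hA k)
      (norm_smul_apply_sub_smul_apply_le hΔt.le (hσB k) (hB k) (hF k)) x x'
    rw [hc₁]; linarith
  have hH : ∀ k y y', ‖H k y - H k y'‖ ≤ c₂ k * ‖y - y'‖ := fun k y y' => by
    have := norm_sub_sub_le_add_mul_norm_sub (hAic k)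
      (norm_smul_apply_sub_smul_apply_le hΔt.le (hσBic k) (hBic k) (hf₀ k)) y y'
    rw [hc₂]; linarith
  have hwindow : ∀ k, c₁ k * ‖uR k - u k‖
      ≤ ‖R k (uP k) (uP₀ k)‖ + 2 * c₂ k * ‖uR₀ k - u₀ k‖ := fun k => by
    simp only [hRGH] at hFOM hopt ⊢
    exact mul_norm_sub_le_of_norm_add_le (hG k) (hH k) (hc₂nonneg k) (hFOM k)
      (hopt k (uP k) (huPS k))
      (huP₀ k ▸ (W k).norm_sub_orthogonalProjectionOnto_le_of_mem (huR₀W k) (u₀ k))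
  refine le_sum_gronwallWeight_mul (b := fun k => 2 * c₂ k) (e := fun k => ‖uR k - u k‖)
    (r := fun i => ‖R i (uP i) (uP₀ i)‖) hc₁pos (fun k => by linarith [hc₂nonneg k])
    (by simpa [hIC0] using hwindow 0) (fun k => (hwindow (k + 1)).trans ?_) k
  have hIC' : ‖uR₀ (k + 1) - u₀ (k + 1)‖ ≤ ‖uR k - u k‖ := by
    simpa using hIC (k + 1) k.succ_pos
  linarith [mul_le_mul_of_nonneg_left hIC' (hc₂nonneg (k + 1))]

/-- Global a priori error bound for WST-LSPG (Corollary 4.6). -/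
theorem global_a_priori_error_bound
    (N : ℕ) (M : ℕ → ℕ)
    (A B : ∀ k : ℕ, EuclideanSpace ℝ (Fin (M k)) →L[ℝ] EuclideanSpace ℝ (Fin (M k)))
    (Aic Bic : ∀ k : ℕ, EuclideanSpace ℝ (Fin N) →L[ℝ] EuclideanSpace ℝ (Fin (M k)))
    (Δt : ℝ) (hΔt : 0 < Δt)
    (F : ∀ k : ℕ, EuclideanSpace ℝ (Fin (M k)) → EuclideanSpace ℝ (Fin (M k)))
    (f₀ : ℕ → EuclideanSpace ℝ (Fin N) → EuclideanSpace ℝ (Fin N))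
    (κ : ℝ) (hκ : 0 ≤ κ)
    (hF : ∀ k x y, ‖F k x - F k y‖ ≤ κ * ‖x - y‖)
    (hf₀ : ∀ k x y, ‖f₀ k x - f₀ k y‖ ≤ κ * ‖x - y‖)
    (σA σB σAic σBic : ℕ → ℝ)
    (hσA : ∀ k, 0 < σA k) (hA : ∀ k x, σA k * ‖x‖ ≤ ‖A k x‖)
    (hσB : ∀ k, 0 ≤ σB k) (hB : ∀ k x, ‖B k x‖ ≤ σB k * ‖x‖)
    (hσAic : ∀ k, 0 ≤ σAic k) (hAic : ∀ k x, ‖Aic k x‖ ≤ σAic k * ‖x‖)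
    (hσBic : ∀ k, 0 ≤ σBic k) (hBic : ∀ k x, ‖Bic k x‖ ≤ σBic k * ‖x‖)
    (R : ∀ k : ℕ, EuclideanSpace ℝ (Fin (M k)) → EuclideanSpace ℝ (Fin N) →
      EuclideanSpace ℝ (Fin (M k)))
    (hR : ∀ k w w₀, R k w w₀ =
      A k w - Δt • B k (F k w) + Aic k w₀ - Δt • Bic k (f₀ k w₀))
    (c₁ c₂ : ℕ → ℝ)
    (hc₁ : ∀ k, c₁ k = σA k - σB k * Δt * κ)
    (hc₂ : ∀ k, c₂ k = σAic k + Δt * κ * σBic k)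
    (hc₁pos : ∀ k, 0 < c₁ k)
    (u : ∀ k : ℕ, EuclideanSpace ℝ (Fin (M k))) (u₀ : ℕ → EuclideanSpace ℝ (Fin N))
    (hFOM : ∀ k, R k (u k) (u₀ k) = 0)
    (uR : ∀ k : ℕ, EuclideanSpace ℝ (Fin (M k))) (uR₀ : ℕ → EuclideanSpace ℝ (Fin N))
    (hIC0 : uR₀ 0 = u₀ 0)
    (hIC : ∀ k, 1 ≤ k → ‖uR₀ k - u₀ k‖ ≤ ‖uR (k - 1) - u (k - 1)‖)
    (S : ∀ k : ℕ, Set (EuclideanSpace ℝ (Fin (M k))))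
    (W : ℕ → Submodule ℝ (EuclideanSpace ℝ (Fin N)))
    (huR₀W : ∀ k, uR₀ k ∈ W k)
    (uP : ∀ k : ℕ, EuclideanSpace ℝ (Fin (M k)))
    (huPS : ∀ k, uP k ∈ S k)
    (huPclosest : ∀ k, ∀ w ∈ S k, ‖u k - uP k‖ ≤ ‖u k - w‖)
    (uP₀ : ℕ → EuclideanSpace ℝ (Fin N))
    (huP₀ : ∀ k, uP₀ k = (Submodule.orthogonalProjectionOnto (W k) (u₀ k) : EuclideanSpace ℝ (Fin N)))
    (hopt : ∀ k, ∀ w ∈ S k, ‖R k (uR k) (uR₀ k)‖ ≤ ‖R k w (uR₀ k)‖)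
    (k : ℕ) :
    ‖uR k - u k‖ ≤ ∑ i ∈ Finset.range (k + 1),
      ((∏ j ∈ Finset.range (k - i), 2 * c₂ (k - j)) /
        (∏ j ∈ Finset.range (k - i + 1), c₁ (k - j))) * ‖R i (uP i) (uP₀ i)‖ :=
  global_a_priori_error_bound_general N M A B Aic Bic Δt hΔt F f₀ κ hκ hF hf₀ σA σB σAic σBic hA hσB
    hB hσAic hAic hσBic hBic R hR c₁ c₂ hc₁ hc₂ hc₁pos u u₀ hFOM uR uR₀ hIC0 hIC S W huR₀W uP huPS
    uP₀ huP₀ hopt k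
end
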